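/- Let c, k be positive integers with k odd, let 0 ≤ j < c, and let d ≥ 0. If n ≥ (2d+1)·kc, then Φ_{kc}(q)^{d+1} divides ∑_{m ≡ j (mod c), 0 ≤ m ≤ n} (-1)^{(m-j)/c} binom(n,m)_q in ℤ[q]. -/

import Mathlib

open Polynomial Finset

/-- The Gaussian (q-)binomial coefficient as a polynomial, satisfying the
product formula `∏_{i=n-m+1}^{n}(1-q^i) / ∏_{i=1}^{m}(1-q^i)`. -/
noncomputable def qbinom (R : Type*) [CommRing R] : ℕ → ℕ → Polynomial R
  | _, 0 => 1
  | 0, _+1 => 0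
  | n+1, m+1 => qbinom R n (m+1) + X ^ (n - m) * qbinom R n m

/-!
Write `[n, m]` for `qbinom ℤ n m`, `Φ` for `Φ_N` and `S_l^n(w) = ∑_m w(m) q^(lm) [n, m]`.
The sign pattern of the theorem is `N`-antiperiodic for `N = kc` with `k` odd, and one proves
more generally that `Φ^(d+1) ∣ S_l^n(ε f)` whenever `ε` is `N`-antiperiodic, `f` is an
integer-valued polynomial function of degree `≤ s` and `n ≥ (2d+1+s)N`, by induction on `d`
and then on `s`.

Pascal's rule `[n+1, m] = q^m [n, m] + [n, m-1]` reduces this to `n = N + n₀` with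
`n₀ = (2d+s)N`, where q-Vandermonde gives
`S_l^n(ε f) = ∑_r [N, r] q^(lr) S_(l+N-r)^n₀((ε f)(· + r))`. For `0 < r < N` we have
`Φ ∣ [N, r]`, and the induction on `d` supplies `Φ^d`. By antiperiodicity the terms `r = 0`
and `r = N` combine into
`∑_m ε(m) q^(lm) [n₀, m] (f(m) (q^(Nm) - q^(Nl)) - q^(Nl) (f(m+N) - f(m)))`.
Expanding `q^(Nm) - q^(Nl) = ∑_(i ≥ 1) (C(m,i) - C(l,i)) (q^N - 1)^i`, the `i`-th term gains
`Φ^i` at the price of raising the degree of the weight by `i`, which the induction at `d - i`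
absorbs; `f(m+N) - f(m)` has degree `s - 1` and is handled by the induction on `s`.
-/

section QBinom

variable {R : Type*} [CommRing R]

theorem qbinom_succ_succ (n m : ℕ) :
    qbinom R (n + 1) (m + 1) = qbinom R n (m + 1) + X ^ (n - m) * qbinom R n m :=
  rfl

theorem qbinom_zero_right (n : ℕ) : qbinom R n 0 = 1 := by
  cases n <;> rfl

theorem qbinom_eq_zero_of_lt : ∀ {n m : ℕ}, n < m → qbinom R n m = 0
  | 0, _ + 1, _ => rfl
  | n + 1, m + 1, h => by
    rw [qbinom_succ_succ, qbinom_eq_zero_of_lt (by omega), qbinom_eq_zero_of_lt (by omega),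
      mul_zero, add_zero]

theorem qbinom_self : ∀ n : ℕ, qbinom R n n = 1
  | 0 => rfl
  | n + 1 => by
    rw [qbinom_succ_succ, qbinom_eq_zero_of_lt (by omega), qbinom_self n, Nat.sub_self, pow_zero,
      zero_add, one_mul]

theorem X_pow_sub_one_mul_qbinom_succ (n m : ℕ) :
    (X ^ (m + 1) - 1) * qbinom R n (m + 1) = (X ^ (n - m) - 1) * qbinom R n m := by
  induction n generalizing m with
  | zero => simp [qbinom]
  | succ n ih =>
    cases m with
    | zero =>
      have h := ih 0
      simp only [qbinom_succ_succ n 0, qbinom_zero_right, Nat.sub_zero] at h ⊢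
      linear_combination h
    | succ m =>
      rw [qbinom_succ_succ n (m + 1), qbinom_succ_succ n m]
      rcases lt_or_ge m n with hmn | hnm
      · obtain ⟨p, hp⟩ : ∃ p, n - m = p + 1 := ⟨n - m - 1, by omega⟩
        have ih₁ := ih (m + 1)
        have ih₂ := ih m
        rw [show n - (m + 1) = p by omega] at ih₁ ⊢
        rw [hp] at ih₂
        rw [Nat.add_sub_add_right, hp]
        linear_combination ih₁ + X ^ (p + 1) * ih₂
      · rw [qbinom_eq_zero_of_lt (by omega : n < m + 1 + 1),
          qbinom_eq_zero_of_lt (by omega : n < m + 1), show n + 1 - (m + 1) = 0 by omega]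
        ring

theorem qbinom_succ_succ' (n m : ℕ) :
    qbinom R (n + 1) (m + 1) = X ^ (m + 1) * qbinom R n (m + 1) + qbinom R n m := by
  rw [qbinom_succ_succ]
  linear_combination -X_pow_sub_one_mul_qbinom_succ (R := R) n m

theorem X_pow_sub_one_mul_qbinom_succ_succ (n m : ℕ) :
    (X ^ (m + 1) - 1) * qbinom R (n + 1) (m + 1) = (X ^ (n + 1) - 1) * qbinom R n m := by
  rcases le_or_gt m n with hmn | hnm
  · obtain ⟨p, rfl⟩ := Nat.exists_eq_add_of_le hmn
    have h := X_pow_sub_one_mul_qbinom_succ (R := R) (m + p) m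
    rw [Nat.add_sub_cancel_left] at h
    rw [qbinom_succ_succ, Nat.add_sub_cancel_left]
    linear_combination h
  · rw [qbinom_eq_zero_of_lt hnm, qbinom_eq_zero_of_lt (by omega)]
    ring

end QBinom

section QBinomSum

variable {R : Type*} [CommRing R]

theorem sum_range_qbinom_mul_eq {n M : ℕ} (h : n < M) (g : ℕ → R[X]) :
    ∑ m ∈ range (n + 1), qbinom R n m * g m = ∑ m ∈ range M, qbinom R n m * g m := by
  refine sum_subset (range_subset_range.mpr h) fun m _ hm => ?_
  rw [qbinom_eq_zero_of_lt (by simpa using hm), zero_mul]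

noncomputable def qbinomSum (w : ℕ → R) (l n : ℕ) : R[X] :=
  ∑ m ∈ range (n + 1), qbinom R n m * (C (w m) * X ^ (l * m))

theorem qbinomSum_neg (w : ℕ → R) (l n : ℕ) : qbinomSum (-w) l n = -qbinomSum w l n := by
  simp [qbinomSum]

theorem sum_range_qbinom_mul_eq_succ (n : ℕ) (g : ℕ → R[X]) :
    ∑ m ∈ range (n + 1), qbinom R n m * g m =
      ∑ m ∈ range (n + 1), qbinom R n (m + 1) * g (m + 1) + g 0 := by
  rw [sum_range_qbinom_mul_eq (by omega : n < n + 1 + 1), sum_range_succ', qbinom_zero_right,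
    one_mul]

theorem qbinomSum_succ (w : ℕ → R) (l n : ℕ) :
    qbinomSum w l (n + 1) =
      qbinomSum w (l + 1) n + X ^ l * qbinomSum (fun m => w (m + 1)) l n := by
  simp only [qbinomSum]
  rw [sum_range_succ' _ (n + 1),
    sum_range_qbinom_mul_eq_succ n (fun m => C (w m) * X ^ ((l + 1) * m)), mul_sum,
    qbinom_zero_right, add_right_comm, ← sum_add_distrib]
  congr 1
  · refine sum_congr rfl fun m _ => ?_
    rw [qbinom_succ_succ']
    ring
  · simp

theorem qbinomSum_add (w : ℕ → R) (a b l : ℕ) :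
    qbinomSum w l (a + b) = ∑ r ∈ range (a + 1),
      qbinom R a r * (X ^ (l * r) * qbinomSum (fun m => w (m + r)) (l + a - r) b) := by
  induction a generalizing w l with
  | zero => simp [qbinom_zero_right]
  | succ a ih =>
    rw [Nat.add_right_comm, qbinomSum_succ, ih, ih, sum_range_succ' _ (a + 1),
      sum_range_qbinom_mul_eq_succ a, mul_sum, qbinom_zero_right, add_right_comm,
      ← sum_add_distrib]
    congr 1
    · refine sum_congr rfl fun r _ => ?_
      rw [qbinom_succ_succ', show l + 1 + a - (r + 1) = l + (a + 1) - (r + 1) by omega,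
        show l + a - r = l + (a + 1) - (r + 1) by omega]
      simp only [← add_assoc]
      ring
    · simp [add_assoc, add_comm 1 a]

theorem pow_sub_pow_eq_sum_choose (x : R) {m l M : ℕ} (hm : m ≤ M) (hl : l ≤ M) :
    x ^ m - x ^ l =
      ∑ i ∈ range M, ((m.choose (i + 1) : R) - l.choose (i + 1)) * (x - 1) ^ (i + 1) := by
  have expand : ∀ k ≤ M, x ^ k = ∑ i ∈ range (M + 1), (k.choose i : R) * (x - 1) ^ i := by
    intro k hk
    conv_lhs => rw [← sub_add_cancel x 1, add_pow]
    refine sum_subset (range_subset_range.mpr (by omega)) (fun i _ hi => ?_) |>.trans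
      (sum_congr rfl fun i _ => by ring)
    rw [Nat.choose_eq_zero_of_lt (by simpa using hi)]
    simp
  rw [expand m hm, expand l hl, ← sum_sub_distrib, sum_range_succ']
  simp [sub_mul]

theorem qbinomSum_add_sub_X_pow_mul_shift (ε f : ℕ → R) (N l n : ℕ) :
    qbinomSum (ε * f) (l + N) n - X ^ (l * N) * qbinomSum (ε * fun m => f (m + N)) l n =
      ∑ i ∈ range (n + l), (X ^ N - 1) ^ (i + 1) *
          qbinomSum (ε * fun m => ((m.choose (i + 1) : R) - l.choose (i + 1)) * f m) l n -
        X ^ (l * N) * qbinomSum (ε * fun m => f (m + N) - f m) l n := by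
  simp only [qbinomSum, mul_sum]
  rw [sum_comm, ← sum_sub_distrib, ← sum_sub_distrib]
  refine sum_congr rfl fun m hm => ?_
  have hexp := pow_sub_pow_eq_sum_choose (X ^ N : R[X]) (m := m) (l := l) (M := n + l)
    (by simp at hm; omega) (by omega)
  have hsum : ∑ i ∈ range (n + l), (X ^ N - 1) ^ (i + 1) * (qbinom R n m *
      (C ((ε * fun m => ((m.choose (i + 1) : R) - l.choose (i + 1)) * f m) m) * X ^ (l * m))) =
      qbinom R n m * C (ε m * f m) * X ^ (l * m) * ((X ^ N) ^ m - (X ^ N) ^ l) := by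
    rw [hexp, mul_sum]
    refine sum_congr rfl fun i _ => ?_
    simp only [Pi.mul_apply, map_mul, map_sub, map_natCast]
    ring
  rw [hsum]
  simp only [Pi.mul_apply, map_mul, map_sub]
  ring

end QBinomSum

section PolyFn

open fwdDiff fwdDiff_aux

theorem fwdDiff_mul {M R : Type*} [AddCommMonoid M] [CommRing R] (h : M) (f g : M → R) :
    Δ_[h] (f * g) = Δ_[h] f * (fun x => g (x + h)) + f * Δ_[h] g := by
  ext x
  simp only [fwdDiff, Pi.mul_apply, Pi.add_apply]
  ring

def polyFnDegLE (s : ℕ) : Submodule ℤ (ℕ → ℤ) :=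
  LinearMap.ker (fwdDiffₗ ℕ ℤ 1 ^ (s + 1))

variable {s : ℕ} {f g : ℕ → ℤ}

theorem mem_polyFnDegLE : f ∈ polyFnDegLE s ↔ (Δ_[1])^[s + 1] f = 0 := by
  rw [polyFnDegLE, LinearMap.mem_ker, coe_fwdDiffₗ_pow]

theorem mem_polyFnDegLE_succ : f ∈ polyFnDegLE (s + 1) ↔ Δ_[1] f ∈ polyFnDegLE s := by
  rw [mem_polyFnDegLE, mem_polyFnDegLE, Function.iterate_succ_apply]

theorem eq_const_of_mem_polyFnDegLE_zero (hf : f ∈ polyFnDegLE 0) : f = fun _ => f 0 := by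
  rw [mem_polyFnDegLE, zero_add, Function.iterate_one] at hf
  funext m
  induction m with
  | zero => rfl
  | succ m ih => rw [← ih, ← sub_eq_zero, ← fwdDiff, hf, Pi.zero_apply]

theorem polyFnDegLE_mono : Monotone polyFnDegLE := by
  intro s t hst f hf
  obtain ⟨k, rfl⟩ := Nat.exists_eq_add_of_le hst
  rw [mem_polyFnDegLE] at hf ⊢
  rw [show s + k + 1 = k + (s + 1) by omega, Function.iterate_add_apply, hf]
  exact Function.iterate_fixed (fwdDiff_const 1 0) k

theorem const_mem_polyFnDegLE (a : ℤ) : (fun _ => a) ∈ polyFnDegLE s :=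
  polyFnDegLE_mono (Nat.zero_le s) (mem_polyFnDegLE.mpr (fwdDiff_const 1 a))

theorem choose_mem_polyFnDegLE (i : ℕ) : (fun m => (m.choose i : ℤ)) ∈ polyFnDegLE i := by
  have h := fwdDiff_iter_choose 0 i
  rw [add_zero] at h
  rw [mem_polyFnDegLE, Function.iterate_succ_apply', h]
  funext x
  simp [fwdDiff]

theorem comp_add_mem_polyFnDegLE (hf : f ∈ polyFnDegLE s) (r : ℕ) :
    (fun m => f (m + r)) ∈ polyFnDegLE s := by
  rw [mem_polyFnDegLE] at hf ⊢
  funext y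
  rw [fwdDiff_iter_comp_add, hf, Pi.zero_apply, Pi.zero_apply]

theorem mul_mem_polyFnDegLE {a b : ℕ} (hf : f ∈ polyFnDegLE a) (hg : g ∈ polyFnDegLE b) :
    f * g ∈ polyFnDegLE (a + b) := by
  induction a generalizing b f g with
  | zero =>
    have hfg : f * g = f 0 • g := by
      rw [eq_const_of_mem_polyFnDegLE_zero hf]
      rfl
    rw [hfg, zero_add]
    exact (polyFnDegLE b).smul_mem (f 0) hg
  | succ a iha =>
    induction b generalizing g with
    | zero =>
      have hfg : f * g = g 0 • f := by
        rw [eq_const_of_mem_polyFnDegLE_zero hg, mul_comm]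
        rfl
      rw [hfg]
      exact (polyFnDegLE _).smul_mem (g 0) hf
    | succ b ihb =>
      have h₁ : Δ_[1] f * (fun m => g (m + 1)) ∈ polyFnDegLE (a + (b + 1)) :=
        iha (mem_polyFnDegLE_succ.mp hf) (comp_add_mem_polyFnDegLE hg 1)
      have h₂ : f * Δ_[1] g ∈ polyFnDegLE (a + (b + 1)) := by
        simpa only [Nat.add_right_comm a 1 b, Nat.add_assoc] using
          ihb (mem_polyFnDegLE_succ.mp hg)
      rw [show a + 1 + (b + 1) = a + (b + 1) + 1 by omega, mem_polyFnDegLE_succ, fwdDiff_mul]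
      exact add_mem h₁ h₂

theorem sub_comp_add_mem_polyFnDegLE (hf : f ∈ polyFnDegLE (s + 1)) (N : ℕ) :
    (fun m => f (m + N) - f m) ∈ polyFnDegLE s := by
  have htel : (fun m => f (m + N) - f m) = ∑ i ∈ range N, fun m => Δ_[1] f (m + i) := by
    funext m
    simpa [fwdDiff, add_assoc] using (sum_range_sub (fun i => f (m + i)) N).symm
  rw [htel]
  exact Submodule.sum_mem _ fun i _ =>
    comp_add_mem_polyFnDegLE (mem_polyFnDegLE_succ.mp hf) i

end PolyFn

theorem cyclotomic_dvd_qbinom {N r : ℕ} (hr0 : 0 < r) (hrN : r < N) :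
    cyclotomic N ℤ ∣ qbinom ℤ N r := by
  have hN : 0 < N := by omega
  obtain ⟨ζ, hζ⟩ : ∃ ζ : ℂ, IsPrimitiveRoot ζ N :=
    ⟨_, Complex.isPrimitiveRoot_exp N hN.ne'⟩
  rw [cyclotomic_eq_minpoly hζ hN, ← minpoly.isIntegrallyClosed_dvd_iff (hζ.isIntegral hN)]
  obtain ⟨n, rfl⟩ : ∃ n, N = n + 1 := ⟨N - 1, by omega⟩
  obtain ⟨m, rfl⟩ : ∃ m, r = m + 1 := ⟨r - 1, by omega⟩
  have h := congrArg (aeval ζ) (X_pow_sub_one_mul_qbinom_succ_succ (R := ℤ) n m)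
  simp only [map_mul, map_sub, map_pow, aeval_X, map_one, hζ.pow_eq_one, sub_self,
    zero_mul] at h
  exact (mul_eq_zero.mp h).resolve_left
    (sub_ne_zero.mpr (hζ.pow_ne_one_of_pos_of_lt (by omega) hrN))

open Function

def CyclotomicPowDvdQBinomSums (N e s n : ℕ) : Prop :=
  ∀ ε f : ℕ → ℤ, Antiperiodic ε N → f ∈ polyFnDegLE s →
    ∀ l, cyclotomic N ℤ ^ e ∣ qbinomSum (ε * f) l n

namespace CyclotomicPowDvdQBinomSums

variable {N e s n : ℕ}

theorem succ (h : CyclotomicPowDvdQBinomSums N e s n) :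
    CyclotomicPowDvdQBinomSums N e s (n + 1) := by
  intro ε f hε hf l
  rw [qbinomSum_succ]
  exact dvd_add (h ε f hε hf (l + 1))
    (dvd_mul_of_dvd_right (h _ _ (hε.add_const 1) (comp_add_mem_polyFnDegLE hf 1) l) _)

theorem mono {n' : ℕ} (h : CyclotomicPowDvdQBinomSums N e s n) (hn : n ≤ n') :
    CyclotomicPowDvdQBinomSums N e s n' :=
  Nat.le_induction h (fun _ _ => succ) n' hn

end CyclotomicPowDvdQBinomSums

section Induction

variable {N d s : ℕ}

theorem cyclotomic_pow_dvd_qbinomSum_add_sub_X_pow_mul_shift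
    (hd : ∀ d' < d, ∀ s', CyclotomicPowDvdQBinomSums N (d' + 1) s' ((2 * d' + 1 + s') * N))
    (hs : ∀ s' < s, CyclotomicPowDvdQBinomSums N (d + 1) s' ((2 * d + 1 + s') * N))
    {ε f : ℕ → ℤ} (hε : Antiperiodic ε N) (hf : f ∈ polyFnDegLE s) (l : ℕ) :
    cyclotomic N ℤ ^ (d + 1) ∣ qbinomSum (ε * f) (l + N) ((2 * d + s) * N) -
      X ^ (l * N) * qbinomSum (ε * fun m => f (m + N)) l ((2 * d + s) * N) := by
  have hΦ : cyclotomic N ℤ ∣ X ^ N - 1 := cyclotomic.dvd_X_pow_sub_one N ℤ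
  rw [qbinomSum_add_sub_X_pow_mul_shift]
  refine dvd_sub (dvd_sum fun i _ => ?_) (dvd_mul_of_dvd_right ?_ _)
  · rcases lt_or_ge d (i + 1) with hid | hid
    · exact dvd_mul_of_dvd_left ((pow_dvd_pow _ hid).trans (pow_dvd_pow_of_dvd hΦ _)) _
    · have hg : (fun m => ((m.choose (i + 1) : ℤ) - l.choose (i + 1)) * f m) ∈
          polyFnDegLE (i + 1 + s) :=
        mul_mem_polyFnDegLE (sub_mem (choose_mem_polyFnDegLE _) (const_mem_polyFnDegLE _)) hf
      have hsum := (hd (d - (i + 1)) (by omega) (i + 1 + s)).mono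
        (Nat.mul_le_mul_right N (by omega : 2 * (d - (i + 1)) + 1 + (i + 1 + s) ≤ 2 * d + s))
        ε _ hε hg l
      rw [show d + 1 = (i + 1) + (d - (i + 1) + 1) by omega, pow_add]
      exact mul_dvd_mul (pow_dvd_pow_of_dvd hΦ _) hsum
  · cases s with
    | zero =>
      rw [eq_const_of_mem_polyFnDegLE_zero hf]
      simp [qbinomSum]
    | succ s =>
      exact (hs s (lt_add_one s)).mono (Nat.mul_le_mul_right N (by omega)) ε _ hε
        (sub_comp_add_mem_polyFnDegLE hf N) l

theorem cyclotomicPowDvdQBinomSums_step (hN : 0 < N)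
    (hd : ∀ d' < d, ∀ s', CyclotomicPowDvdQBinomSums N (d' + 1) s' ((2 * d' + 1 + s') * N))
    (hs : ∀ s' < s, CyclotomicPowDvdQBinomSums N (d + 1) s' ((2 * d + 1 + s') * N)) :
    CyclotomicPowDvdQBinomSums N (d + 1) s ((2 * d + 1 + s) * N) := by
  intro ε f hε hf l
  have hinner : ∀ r ∈ Ico 1 N, cyclotomic N ℤ ^ (d + 1) ∣ qbinom ℤ N r *
      (X ^ (l * r) * qbinomSum (fun m => (ε * f) (m + r)) (l + N - r) ((2 * d + s) * N)) := by
    intro r hr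
    rw [mem_Ico] at hr
    rw [pow_succ']
    refine mul_dvd_mul (cyclotomic_dvd_qbinom (by omega) hr.2) (dvd_mul_of_dvd_right ?_ _)
    cases d with
    | zero => exact pow_zero (cyclotomic N ℤ) ▸ one_dvd _
    | succ d =>
      exact (hd d (lt_add_one d) s).mono (Nat.mul_le_mul_right N (by omega)) _ _
        (hε.add_const r) (comp_add_mem_polyFnDegLE hf r) _
  have hshift : (fun m => (ε * f) (m + N)) = -(ε * fun m => f (m + N)) := by
    funext m
    simp [hε m]
  rw [show (2 * d + 1 + s) * N = N + (2 * d + s) * N by ring, qbinomSum_add, sum_range_succ,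
    sum_range_eq_add_Ico _ hN, add_right_comm]
  refine dvd_add ?_ (dvd_sum hinner)
  simp only [qbinom_zero_right, qbinom_self, hshift, qbinomSum_neg, mul_zero, pow_zero,
    Nat.sub_zero, Nat.add_sub_cancel, add_zero, one_mul, mul_neg, ← sub_eq_add_neg]
  exact cyclotomic_pow_dvd_qbinomSum_add_sub_X_pow_mul_shift hd hs hε hf l

theorem cyclotomicPowDvdQBinomSums (hN : 0 < N) (d s n : ℕ) (hn : (2 * d + 1 + s) * N ≤ n) :
    CyclotomicPowDvdQBinomSums N (d + 1) s n := by
  induction d using Nat.strong_induction_on generalizing s n with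
  | _ d ihd =>
    induction s using Nat.strong_induction_on generalizing n with
    | _ s ihs =>
      exact (cyclotomicPowDvdQBinomSums_step hN (fun d' hd' s' => ihd d' hd' s' _ le_rfl)
        (fun s' hs' => ihs s' hs' _ le_rfl)).mono hn

end Induction

def signIndicator (c j m : ℕ) : ℤ :=
  if m % c = j then (-1) ^ ((m - j) / c) else 0

theorem antiperiodic_signIndicator {c : ℕ} (hc : 0 < c) (j : ℕ) :
    Antiperiodic (signIndicator c j) c := by
  intro m
  simp only [signIndicator, Nat.add_mod_right]
  split_ifs with h
  · have hjm : j ≤ m := h ▸ Nat.mod_le m c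
    rw [show m + c - j = m - j + 1 * c by omega, Nat.add_mul_div_right _ _ hc, pow_succ]
    ring
  · simp

theorem q_fleck_special_general (c k : ℕ) (hc : 0 < c) (hk : Odd k)
    (j : ℕ) (d n : ℕ) (hn : (2 * d + 1) * (k * c) ≤ n) :
    Polynomial.cyclotomic (k * c) ℤ ^ (d + 1) ∣
      ∑ m ∈ (Finset.range (n + 1)).filter (fun m => m % c = j),
        C ((-1 : ℤ) ^ ((m - j) / c)) * qbinom ℤ n m := by
  have hε : Antiperiodic (signIndicator c j) (k * c) := by
    obtain ⟨t, rfl⟩ := hk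
    simpa using (antiperiodic_signIndicator hc j).odd_nsmul_antiperiodic t
  have h := cyclotomicPowDvdQBinomSums (Nat.mul_pos hk.pos hc) d 0 n (by simpa using hn)
    _ _ hε (const_mem_polyFnDegLE 1) 0
  convert h using 1
  rw [qbinomSum, sum_filter]
  refine sum_congr rfl fun m _ => ?_
  split_ifs with hm <;> simp [signIndicator, hm, mul_comm]

theorem q_fleck_special (c k : ℕ) (hc : 0 < c) (hk0 : 0 < k) (hk : Odd k)
    (j : ℕ) (hj : j < c) (d n : ℕ) (hn : (2 * d + 1) * (k * c) ≤ n) :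
    Polynomial.cyclotomic (k * c) ℤ ^ (d + 1) ∣
      ∑ m ∈ (Finset.range (n + 1)).filter (fun m => m % c = j),
        C ((-1 : ℤ) ^ ((m - j) / c)) * qbinom ℤ n m :=
  q_fleck_special_general c k hc hk j d n hn
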